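/- arXiv:1103.6128 — 5 statements merged into one kernel-verified Lean document; each statement's English description precedes it below -/
import Mathlib

section
/- Let a ∈ ℝ, let w₁ < w₂, and let r : ℝ → ℝ be continuously differentiable on [w₁, w₂] with 1 + a·r(w)² > 0 and r'(w)² ≤ 1 + a·r(w)² for all w ∈ [w₁, w₂]. Define r̄(w) = r(w)/√(1 + a·r(w)²) and z̄(w) = ∫_{w₁}^{w} √((1 + a·r(τ)² − r'(τ)²)/(1 + a·r(τ)²)³) dτ. Then for every w ∈ (w₁, w₂), z̄ is differentiable at w and r̄'(w)² + z̄'(w)² = 1/(1 + a·r(w)²)². -/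
/-! Differentiating gives `r̄' = r' / (1 + a r²)^{3/2}`, and `z̄'` is the integrand by the
fundamental theorem of calculus, so `r̄'² + z̄'² = (r'² + 1 + a r² - r'²) / (1 + a r²)³`. -/

open Real Set

theorem ContinuousOn.hasDerivAt_intervalIntegral {E : Type*} [NormedAddCommGroup E]
    [NormedSpace ℝ E] [CompleteSpace E] {g : ℝ → E} {a b x : ℝ}
    (hg : ContinuousOn g (Icc a b)) (hx : x ∈ Ioo a b) :
    HasDerivAt (fun t => ∫ τ in a..t, g τ) (g x) x := by
  have hnhds : Icc a b ∈ nhds x := Icc_mem_nhds hx.1 hx.2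
  refine intervalIntegral.integral_hasDerivAt_right ?_
    ⟨Icc a b, hnhds, hg.aestronglyMeasurable measurableSet_Icc⟩ (hg.continuousAt hnhds)
  refine (hg.mono ?_).intervalIntegrable
  rw [uIcc_of_le hx.1.le]
  exact Icc_subset_Icc_right hx.2.le

theorem HasDerivAt.div_sqrt_one_add_mul_sq {f : ℝ → ℝ} {f' x : ℝ} (a : ℝ)
    (hf : HasDerivAt f f' x) (hx : 0 < 1 + a * f x ^ 2) :
    HasDerivAt (fun t => f t / √(1 + a * f t ^ 2))
      (f' / (1 + a * f x ^ 2) / √(1 + a * f x ^ 2)) x := by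
  have hP : HasDerivAt (fun t => 1 + a * f t ^ 2) (a * (2 * f x * f')) x := by
    simpa using ((hf.pow 2).const_mul a).const_add 1
  have hsqrt : √(1 + a * f x ^ 2) ≠ 0 := (sqrt_pos.2 hx).ne'
  refine (hf.div (hP.sqrt hx.ne') hsqrt).congr_deriv ?_
  field_simp
  rw [sq_sqrt hx.le]
  ring

theorem deformed_profile_metric_general
    (a w₁ w₂ : ℝ)
    (r r' : ℝ → ℝ)
    (hr : ∀ w ∈ Set.Icc w₁ w₂, HasDerivAt r (r' w) w)
    (hr' : ContinuousOn r' (Set.Icc w₁ w₂))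
    (hpos : ∀ w ∈ Set.Icc w₁ w₂, 1 + a * r w ^ 2 > 0)
    (hle : ∀ w ∈ Set.Icc w₁ w₂, r' w ^ 2 ≤ 1 + a * r w ^ 2)
    (rbar zbar : ℝ → ℝ)
    (hrbar : rbar = fun w => r w / Real.sqrt (1 + a * r w ^ 2))
    (hzbar : zbar = fun w => ∫ τ in w₁..w,
      Real.sqrt ((1 + a * r τ ^ 2 - r' τ ^ 2) / (1 + a * r τ ^ 2) ^ 3)) :
    ∀ w ∈ Set.Ioo w₁ w₂, DifferentiableAt ℝ zbar w ∧
      deriv rbar w ^ 2 + deriv zbar w ^ 2 = 1 / (1 + a * r w ^ 2) ^ 2 := by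
  intro w hw
  have hwI : w ∈ Icc w₁ w₂ := Ioo_subset_Icc_self hw
  have hP := hpos w hwI
  have hrc : ContinuousOn r (Icc w₁ w₂) := fun x hx => (hr x hx).continuousAt.continuousWithinAt
  have hz : HasDerivAt zbar
      (√((1 + a * r w ^ 2 - r' w ^ 2) / (1 + a * r w ^ 2) ^ 3)) w := by
    subst hzbar
    refine ContinuousOn.hasDerivAt_intervalIntegral ?_ hw
    exact ((continuousOn_const.add (continuousOn_const.mul (hrc.pow 2))).sub (hr'.pow 2)).div
      ((continuousOn_const.add (continuousOn_const.mul (hrc.pow 2))).pow 3)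
      (fun x hx => (pow_pos (hpos x hx) 3).ne') |>.sqrt
  have hrb : HasDerivAt rbar _ w := hrbar ▸ (hr w hwI).div_sqrt_one_add_mul_sq a hP
  refine ⟨hz.differentiableAt, ?_⟩
  rw [hrb.deriv, hz.deriv, div_pow, sq_sqrt hP.le,
    sq_sqrt (div_nonneg (sub_nonneg.2 (hle w hwI)) (pow_pos hP 3).le)]
  field_simp
  ring

/-- The geodesic deformation `(r̄, z̄)` of an arc-length profile `(r, z)` satisfies
`r̄'² + z̄'² = 1/(1 + a r²)²`, i.e. the deformed surface carries the metric
`ds̄² = dw²/(1+ar²)² + r² dσ²/(1+ar²)`. -/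
theorem deformed_profile_metric
    (a w₁ w₂ : ℝ) (hw : w₁ < w₂)
    (r r' : ℝ → ℝ)
    (hr : ∀ w ∈ Set.Icc w₁ w₂, HasDerivAt r (r' w) w)
    (hr' : ContinuousOn r' (Set.Icc w₁ w₂))
    (hpos : ∀ w ∈ Set.Icc w₁ w₂, 1 + a * r w ^ 2 > 0)
    (hle : ∀ w ∈ Set.Icc w₁ w₂, r' w ^ 2 ≤ 1 + a * r w ^ 2)
    (rbar zbar : ℝ → ℝ)
    (hrbar : rbar = fun w => r w / Real.sqrt (1 + a * r w ^ 2))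
    (hzbar : zbar = fun w => ∫ τ in w₁..w,
      Real.sqrt ((1 + a * r τ ^ 2 - r' τ ^ 2) / (1 + a * r τ ^ 2) ^ 3)) :
    ∀ w ∈ Set.Ioo w₁ w₂, DifferentiableAt ℝ zbar w ∧
      deriv rbar w ^ 2 + deriv zbar w ^ 2 = 1 / (1 + a * r w ^ 2) ^ 2 :=
  deformed_profile_metric_general a w₁ w₂ r r' hr hr' hpos hle rbar zbar hrbar hzbar
end

section
/- Let k > 0 and a ∈ ℝ with 1 + a·k²·max(1, k²) > 0. For φ ∈ (0, π/2) let W(φ) = √(k²cos²φ + sin²φ), r(φ) = k·sin φ, define r̄(φ) = k·sin φ/√(1 + a·k²·sin²φ), z̄(φ) = ∫₀^φ √((1 + a·r(τ)² − (k·cos τ/W(τ))²)/(1 + a·r(τ)²)³)·W(τ) dτ, and the rescaled profile r̂(φ) = √(1 + a·k²)·r̄(φ), ẑ(φ) = √(1 + a·k²)·z̄(φ). Then for every φ ∈ (0, π/2), r̂'(φ) ≠ 0 and ẑ'(φ)/r̂'(φ) = (r̂(φ)/(k·√(k² − r̂(φ)²)))·√((1 + a·k²·(k² − r̂(φ)²))/(1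 + a·(k² − r̂(φ)²))). -/
/-!
Write `g = 1 + a k² sin² φ` and `W² = k² cos² φ + sin² φ`. Then `r̄' = k cos φ / g^{3/2}`,
and the identity `g W² - k² cos² φ = sin² φ (1 + a k² W²)` collapses the integrand of `z̄`
to `z̄' = sin φ √(1 + a k² W²) / g^{3/2}`. Both derivatives carry the factor `√(1 + a k²)`,
so `ẑ'/r̂' = sin φ √(1 + a k² W²) / (k cos φ)`. On the other side `k² - r̂² = k² cos² φ / g`,
so `1 + a (k² - r̂²) = (1 + a k²) / g` and `1 + a k² (k² - r̂²) = (1 + a k² W²) / g`, and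
the right-hand side reduces to the same expression.
-/

open Real

lemma one_add_mul_pos_of_le {c m t : ℝ} (hm : 0 < 1 + c * m) (ht : 0 ≤ t) (htm : t ≤ m) :
    0 < 1 + c * t := by
  rcases le_or_gt 0 c with hc | hc
  · nlinarith [mul_nonneg hc ht]
  · nlinarith [mul_le_mul_of_nonpos_left htm hc.le]

lemma sq_mul_cos_sq_add_sin_sq_pos {k : ℝ} (hk : k ≠ 0) (x : ℝ) :
    0 < k ^ 2 * cos x ^ 2 + sin x ^ 2 := by
  rcases eq_or_ne (cos x) 0 with h | h
  · simp [h, sin_sq]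
  · positivity

lemma hasDerivAt_mul_sin_div_sqrt (k : ℝ) {c x : ℝ} (hx : 0 < 1 + c * sin x ^ 2) :
    HasDerivAt (fun y => k * sin y / √(1 + c * sin y ^ 2))
      (k * cos x / ((1 + c * sin x ^ 2) * √(1 + c * sin x ^ 2))) x := by
  have hden : HasDerivAt (fun y => 1 + c * sin y ^ 2) (c * (2 * sin x * cos x)) x := by
    simpa using (((hasDerivAt_sin x).pow 2).const_mul c).const_add 1
  refine (((hasDerivAt_sin x).const_mul k).div (hden.sqrt hx.ne')
    (sqrt_pos.2 hx).ne').congr_deriv ?_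
  have hq := sq_sqrt hx.le
  rw [hq]
  field_simp
  linear_combination k * cos x * hq

lemma continuous_deformed_integrand {k a : ℝ} (hk : k ≠ 0)
    (hg : ∀ x, 0 < 1 + a * k ^ 2 * sin x ^ 2) :
    Continuous fun x =>
      √((1 + a * (k * sin x) ^ 2 - (k * cos x / √(k ^ 2 * cos x ^ 2 + sin x ^ 2)) ^ 2) /
        (1 + a * (k * sin x) ^ 2) ^ 3) * √(k ^ 2 * cos x ^ 2 + sin x ^ 2) := by
  have hg' x : (1 + a * (k * sin x) ^ 2) ^ 3 ≠ 0 := by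
    rw [mul_pow, ← mul_assoc]
    exact (pow_pos (hg x) 3).ne'
  have hW x : √(k ^ 2 * cos x ^ 2 + sin x ^ 2) ≠ 0 :=
    (sqrt_pos.2 (sq_mul_cos_sq_add_sin_sq_pos hk x)).ne'
  fun_prop (disch := assumption)

lemma deformed_integrand_eq {k a x : ℝ} (hW : 0 < k ^ 2 * cos x ^ 2 + sin x ^ 2)
    (hg : 0 < 1 + a * k ^ 2 * sin x ^ 2) (hs : 0 ≤ sin x) :
    √((1 + a * (k * sin x) ^ 2 - (k * cos x / √(k ^ 2 * cos x ^ 2 + sin x ^ 2)) ^ 2) /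
        (1 + a * (k * sin x) ^ 2) ^ 3) * √(k ^ 2 * cos x ^ 2 + sin x ^ 2) =
      sin x * √(1 + a * k ^ 2 * (k ^ 2 * cos x ^ 2 + sin x ^ 2)) /
        ((1 + a * k ^ 2 * sin x ^ 2) * √(1 + a * k ^ 2 * sin x ^ 2)) := by
  have hg' : 1 + a * (k * sin x) ^ 2 = 1 + a * k ^ 2 * sin x ^ 2 := by ring
  have hsquare :
      (1 + a * k ^ 2 * sin x ^ 2 - (k * cos x / √(k ^ 2 * cos x ^ 2 + sin x ^ 2)) ^ 2) /
        (1 + a * k ^ 2 * sin x ^ 2) ^ 3 =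
      (sin x / (√(k ^ 2 * cos x ^ 2 + sin x ^ 2) *
        ((1 + a * k ^ 2 * sin x ^ 2) * √(1 + a * k ^ 2 * sin x ^ 2)))) ^ 2 *
        (1 + a * k ^ 2 * (k ^ 2 * cos x ^ 2 + sin x ^ 2)) := by
    simp only [div_pow, mul_pow, sq_sqrt hW.le, sq_sqrt hg.le]
    field_simp
    ring
  rw [hg', hsquare, sqrt_mul (sq_nonneg _), sqrt_sq (by positivity)]
  field_simp

section Rescaled

variable {k a x R : ℝ}
  (hR : R = √(1 + a * k ^ 2) * (k * sin x / √(1 + a * k ^ 2 * sin x ^ 2)))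
include hR

lemma sq_sub_sq_rescaled_eq (hA : 0 ≤ 1 + a * k ^ 2) (hg : 0 < 1 + a * k ^ 2 * sin x ^ 2) :
    k ^ 2 - R ^ 2 = k ^ 2 * cos x ^ 2 / (1 + a * k ^ 2 * sin x ^ 2) := by
  rw [hR, mul_pow, div_pow, mul_pow, sq_sqrt hA, sq_sqrt hg.le, cos_sq', eq_div_iff hg.ne',
    sub_mul, mul_assoc (1 + a * k ^ 2), div_mul_cancel₀ _ hg.ne']
  ring

lemma rescaled_meridian_slope_eq (hk : 0 < k) (hc : 0 < cos x) (hA : 0 < 1 + a * k ^ 2)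
    (hg : 0 < 1 + a * k ^ 2 * sin x ^ 2) :
    R / (k * √(k ^ 2 - R ^ 2)) *
        √((1 + a * k ^ 2 * (k ^ 2 - R ^ 2)) / (1 + a * (k ^ 2 - R ^ 2))) =
      sin x * √(1 + a * k ^ 2 * (k ^ 2 * cos x ^ 2 + sin x ^ 2)) / (k * cos x) := by
  have hdiff := sq_sub_sq_rescaled_eq hR hA.le hg
  have hsqrt : √(k ^ 2 - R ^ 2) = k * cos x / √(1 + a * k ^ 2 * sin x ^ 2) := by
    rw [hdiff, sqrt_div' _ hg.le, sqrt_mul' _ (sq_nonneg _), sqrt_sq hk.le, sqrt_sq hc.le]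
  have hnum : 1 + a * k ^ 2 * (k ^ 2 - R ^ 2) =
      (1 + a * k ^ 2 * (k ^ 2 * cos x ^ 2 + sin x ^ 2)) / (1 + a * k ^ 2 * sin x ^ 2) := by
    rw [hdiff, cos_sq']
    field_simp
    ring
  have hden : 1 + a * (k ^ 2 - R ^ 2) = (1 + a * k ^ 2) / (1 + a * k ^ 2 * sin x ^ 2) := by
    rw [hdiff, cos_sq']
    field_simp
    ring
  rw [hsqrt, hnum, hden, div_div_div_cancel_right₀ hg.ne', sqrt_div' _ hA.le, hR]
  field_simp

end Rescaled

/-- The rescaled meridian `(r̂, ẑ)` of the geodesically deformed ellipsoid satisfies the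
differential equation
`dẑ/dr̂ = (r̂/(k√(k² − r̂²)))·√((1 + ak²(k² − r̂²))/(1 + a(k² − r̂²)))`. -/
theorem deformed_ellipsoid_meridian_ode
    (k a : ℝ) (hk : 0 < k) (ha : 1 + a * k ^ 2 * max 1 (k ^ 2) > 0)
    (W r rbar zbar rhat zhat : ℝ → ℝ)
    (hW : W = fun φ => Real.sqrt (k ^ 2 * Real.cos φ ^ 2 + Real.sin φ ^ 2))
    (hr : r = fun φ => k * Real.sin φ)
    (hrbar : rbar = fun φ =>
      k * Real.sin φ / Real.sqrt (1 + a * k ^ 2 * Real.sin φ ^ 2))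
    (hzbar : zbar = fun φ => ∫ τ in (0:ℝ)..φ,
      Real.sqrt ((1 + a * r τ ^ 2 - (k * Real.cos τ / W τ) ^ 2) /
        (1 + a * r τ ^ 2) ^ 3) * W τ)
    (hrhat : rhat = fun φ => Real.sqrt (1 + a * k ^ 2) * rbar φ)
    (hzhat : zhat = fun φ => Real.sqrt (1 + a * k ^ 2) * zbar φ) :
    ∀ φ ∈ Set.Ioo 0 (Real.pi / 2),
      deriv rhat φ ≠ 0 ∧
      deriv zhat φ / deriv rhat φ =
        rhat φ / (k * Real.sqrt (k ^ 2 - rhat φ ^ 2)) *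
          Real.sqrt ((1 + a * k ^ 2 * (k ^ 2 - rhat φ ^ 2)) /
            (1 + a * (k ^ 2 - rhat φ ^ 2))) := by
  have hA : 0 < 1 + a * k ^ 2 := by
    simpa using one_add_mul_pos_of_le ha zero_le_one (le_max_left _ _)
  have hg x : 0 < 1 + a * k ^ 2 * sin x ^ 2 :=
    one_add_mul_pos_of_le ha (sq_nonneg _) ((sin_sq_le_one x).trans (le_max_left _ _))
  subst hW hr hrbar hzbar hrhat hzhat
  rintro φ ⟨hφ₀, hφ⟩
  have hs : 0 < sin φ := sin_pos_of_pos_of_lt_pi hφ₀ (by linarith [pi_pos])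
  have hc : 0 < cos φ := cos_pos_of_mem_Ioo ⟨by linarith, hφ⟩
  have hgφ := hg φ
  have hrhat := (hasDerivAt_mul_sin_div_sqrt k hgφ).const_mul √(1 + a * k ^ 2)
  have hzhat := ((continuous_deformed_integrand hk.ne' hg).integral_hasStrictDerivAt 0 φ
    |>.hasDerivAt).const_mul √(1 + a * k ^ 2)
  have hsqrtA := sqrt_pos.2 hA
  refine ⟨by rw [hrhat.deriv]; positivity, ?_⟩
  rw [hrhat.deriv, hzhat.deriv, mul_div_mul_left _ _ hsqrtA.ne',
    deformed_integrand_eq (sq_mul_cos_sq_add_sin_sq_pos hk.ne' φ) hgφ hs.le,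
    rescaled_meridian_slope_eq rfl hk hc hA hgφ, div_div_div_cancel_right₀ (by positivity)]
end

section
/- Let k > 0, a ∈ ℝ with 1 + a·k² > 0, and r ∈ ℝ with 0 < r < k and 1 + a·r² > 0. Define ρ(r) = r·√((1 + a·k²)/(1 + a·r²)) and M(ρ) = (k² + a·k⁴ + (1/k² − a·k² − 1)·ρ²)/((k² − ρ²)·(1 + a·k² − a·ρ²)). Then ρ is differentiable at r with ρ'(r) = √(1 + a·k²)/(1 + a·r²)^{3/2}, one has 0 < ρ(r)² < k² and 1 + a·k² − a·ρ(r)² > 0, and M(ρ(r))·ρ'(r)² = (1 + a·k²)·(k² + (1/k² − 1)·r²)/((k² − r²)·(1 + a·r²)²), while ρ(r)² = (1 + a·k²)·r²/(1 + a·r²). -/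
open Real

/-!
Write `C = 1 + ak²` and `D = 1 + ar²`. Then `ρ(r)² = C r²/D`, and since `C` is the value
of `1 + at²` at `t = k`, every factor of `M` evaluated at `ρ(r)` is a factor of the
ellipsoid metric divided by `D`: `k² − ρ² = (k² − r²)/D`, `C − aρ² = C/D`, and the
numerator becomes `C(k² + (1/k² − 1)r²)/D`. Together with `ρ'(r)² = C/D³` this gives the
pulled-back coefficient.
-/

lemma rpow_three_halves {d : ℝ} (hd : 0 ≤ d) : d ^ ((3 : ℝ) / 2) = d * √d := by
  rw [show (3 : ℝ) / 2 = 1 + 1 / 2 by norm_num, rpow_add' hd (by norm_num), rpow_one,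
    ← sqrt_eq_rpow]

lemma hasDerivAt_mul_sqrt_div_one_add_mul_sq {a c r : ℝ} (hc : 0 ≤ c)
    (hD : 0 < 1 + a * r ^ 2) :
    HasDerivAt (fun t => t * √(c / (1 + a * t ^ 2)))
      (√c / (1 + a * r ^ 2) ^ ((3 : ℝ) / 2)) r := by
  have hsD : 0 < √(1 + a * r ^ 2) := sqrt_pos.mpr hD
  have hD' : HasDerivAt (fun t => 1 + a * t ^ 2) (2 * a * r) r := by
    simpa [mul_comm, mul_left_comm, mul_assoc] using
      ((hasDerivAt_pow 2 r).const_mul a).const_add 1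
  have hquot := ((hasDerivAt_id' r).div (hD'.sqrt hD.ne') hsD.ne').const_mul √c
  have hfun : (fun t => t * √(c / (1 + a * t ^ 2))) =
      fun t => √c * (t / √(1 + a * t ^ 2)) := by
    funext t
    rw [sqrt_div hc]
    ring
  rw [hfun]
  refine hquot.congr_deriv ?_
  rw [rpow_three_halves hD.le]
  field_simp
  linear_combination √c * (a * r ^ 2) * sq_sqrt hD.le

lemma sq_sqrt_div_rpow_three_halves {c d : ℝ} (hc : 0 ≤ c) (hd : 0 ≤ d) :
    (√c / d ^ ((3 : ℝ) / 2)) ^ 2 = c / d ^ 3 := by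
  rw [div_pow, sq_sqrt hc, ← rpow_natCast, ← rpow_mul hd]
  norm_num

section Pullback

variable {a k r : ℝ}

lemma sq_sub_pullback (hD : 1 + a * r ^ 2 ≠ 0) :
    k ^ 2 - (1 + a * k ^ 2) * r ^ 2 / (1 + a * r ^ 2) = (k ^ 2 - r ^ 2) / (1 + a * r ^ 2) := by
  field_simp
  ring

lemma one_add_mul_sq_sub_pullback (hD : 1 + a * r ^ 2 ≠ 0) :
    1 + a * k ^ 2 - a * ((1 + a * k ^ 2) * r ^ 2 / (1 + a * r ^ 2)) =
      (1 + a * k ^ 2) / (1 + a * r ^ 2) := by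
  field_simp
  ring

lemma numerator_pullback (hk : k ≠ 0) (hD : 1 + a * r ^ 2 ≠ 0) :
    k ^ 2 + a * k ^ 4 +
        (1 / k ^ 2 - a * k ^ 2 - 1) * ((1 + a * k ^ 2) * r ^ 2 / (1 + a * r ^ 2)) =
      (1 + a * k ^ 2) * (k ^ 2 + (1 / k ^ 2 - 1) * r ^ 2) / (1 + a * r ^ 2) := by
  field_simp
  ring

lemma radial_coeff_pullback (hk : k ≠ 0) (hC : 1 + a * k ^ 2 ≠ 0) (hD : 1 + a * r ^ 2 ≠ 0)
    (hkr : k ^ 2 - r ^ 2 ≠ 0) :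
    (k ^ 2 + a * k ^ 4 +
        (1 / k ^ 2 - a * k ^ 2 - 1) * ((1 + a * k ^ 2) * r ^ 2 / (1 + a * r ^ 2))) /
        ((k ^ 2 - (1 + a * k ^ 2) * r ^ 2 / (1 + a * r ^ 2)) *
          (1 + a * k ^ 2 - a * ((1 + a * k ^ 2) * r ^ 2 / (1 + a * r ^ 2)))) *
        ((1 + a * k ^ 2) / (1 + a * r ^ 2) ^ 3) =
      (1 + a * k ^ 2) * (k ^ 2 + (1 / k ^ 2 - 1) * r ^ 2) /
        ((k ^ 2 - r ^ 2) * (1 + a * r ^ 2) ^ 2) := by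
  rw [numerator_pullback hk hD, sq_sub_pullback hD, one_add_mul_sq_sub_pullback hD]
  field_simp

end Pullback

theorem deformed_metric_pullback_general
    (k a r : ℝ) (hak : 1 + a * k ^ 2 > 0)
    (hr₀ : 0 < r) (hrk : r < k) (har : 1 + a * r ^ 2 > 0)
    (ρ : ℝ → ℝ) (M : ℝ → ℝ)
    (hρ : ρ = fun t => t * Real.sqrt ((1 + a * k ^ 2) / (1 + a * t ^ 2)))
    (hM : M = fun t => (k ^ 2 + a * k ^ 4 + (1 / k ^ 2 - a * k ^ 2 - 1) * t ^ 2) /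
      ((k ^ 2 - t ^ 2) * (1 + a * k ^ 2 - a * t ^ 2))) :
    HasDerivAt ρ (Real.sqrt (1 + a * k ^ 2) / (1 + a * r ^ 2) ^ ((3 : ℝ) / 2)) r ∧
    0 < ρ r ^ 2 ∧ ρ r ^ 2 < k ^ 2 ∧
    1 + a * k ^ 2 - a * ρ r ^ 2 > 0 ∧
    M (ρ r) * deriv ρ r ^ 2 =
      (1 + a * k ^ 2) * (k ^ 2 + (1 / k ^ 2 - 1) * r ^ 2) /
        ((k ^ 2 - r ^ 2) * (1 + a * r ^ 2) ^ 2) ∧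
    ρ r ^ 2 = (1 + a * k ^ 2) * r ^ 2 / (1 + a * r ^ 2) := by
  have hderiv : HasDerivAt ρ (√(1 + a * k ^ 2) / (1 + a * r ^ 2) ^ ((3 : ℝ) / 2)) r :=
    hρ ▸ hasDerivAt_mul_sqrt_div_one_add_mul_sq hak.le har
  have hρsq : ρ r ^ 2 = (1 + a * k ^ 2) * r ^ 2 / (1 + a * r ^ 2) := by
    rw [hρ, mul_pow, sq_sqrt (div_nonneg hak.le har.le), mul_div_assoc']
    ring
  have hkr : 0 < k ^ 2 - r ^ 2 := by nlinarith
  refine ⟨hderiv, by rw [hρsq]; positivity, ?_, ?_, ?_, hρsq⟩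
  · rw [← sub_pos, hρsq, sq_sub_pullback har.ne']
    positivity
  · rw [hρsq, one_add_mul_sq_sub_pullback har.ne']
    positivity
  · rw [hderiv.deriv, sq_sqrt_div_rpow_three_halves hak.le har.le, hM]
    dsimp only
    rw [hρsq]
    exact radial_coeff_pullback (by linarith) hak.ne' har.ne' hkr.ne'

/-- Pulling back the metric `M(r̂) dr̂² + r̂² dσ²` of the deformed ellipsoid to the original
ellipsoid via the substitution `r̂ = ρ(r) = r√((1 + ak²)/(1 + ar²))` gives the radial
coefficient `(1 + ak²)(k² + (1/k² − 1)r²)/((k² − r²)(1 + ar²)²)` and the angular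
coefficient `ρ(r)² = (1 + ak²) r²/(1 + ar²)`. -/
theorem deformed_metric_pullback
    (k a r : ℝ) (hk : 0 < k) (hak : 1 + a * k ^ 2 > 0)
    (hr₀ : 0 < r) (hrk : r < k) (har : 1 + a * r ^ 2 > 0)
    (ρ : ℝ → ℝ) (M : ℝ → ℝ)
    (hρ : ρ = fun t => t * Real.sqrt ((1 + a * k ^ 2) / (1 + a * t ^ 2)))
    (hM : M = fun t => (k ^ 2 + a * k ^ 4 + (1 / k ^ 2 - a * k ^ 2 - 1) * t ^ 2) /
      ((k ^ 2 - t ^ 2) * (1 + a * k ^ 2 - a * t ^ 2))) :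
    HasDerivAt ρ (Real.sqrt (1 + a * k ^ 2) / (1 + a * r ^ 2) ^ ((3 : ℝ) / 2)) r ∧
    0 < ρ r ^ 2 ∧ ρ r ^ 2 < k ^ 2 ∧
    1 + a * k ^ 2 - a * ρ r ^ 2 > 0 ∧
    M (ρ r) * deriv ρ r ^ 2 =
      (1 + a * k ^ 2) * (k ^ 2 + (1 / k ^ 2 - 1) * r ^ 2) /
        ((k ^ 2 - r ^ 2) * (1 + a * r ^ 2) ^ 2) ∧
    ρ r ^ 2 = (1 + a * k ^ 2) * r ^ 2 / (1 + a * r ^ 2) :=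
  deformed_metric_pullback_general k a r hak hr₀ hrk har ρ M hρ hM
end

section
/- Let a > −1. Define r̄(w) = sin w/√(1 + a·sin²w) and z̄(w) = ∫₀^w (√(1 + a)·sin τ/(1 + a·sin²τ)^{3/2}) dτ for w ∈ [0, π]. Then for every w ∈ [0, π], r̄(w)² + (1/√(1 + a) − z̄(w))² = 1/(1 + a); i.e. the geodesic deformation of the unit sphere is again a sphere, of radius 1/√(1 + a). -/
open Real

/-!
With `u t = 1 + a sin² t`, the derivative of `cos t / √(u t)` is `-(1 + a) sin t / (u t)^{3/2}`
(since `a sin² t + a cos² t = a`), so `z̄ w = (1 - cos w / √(u w)) / √(1 + a)` and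
`1/√(1 + a) - z̄ w = cos w / (√(1 + a) √(u w))`. Then
`r̄² + (1/√(1 + a) - z̄)² = ((1 + a) sin² w + cos² w) / ((1 + a) u w) = 1 / (1 + a)`.
-/

lemma rpow_three_halves_eq_mul_sqrt {x : ℝ} (hx : 0 ≤ x) : x ^ ((3 : ℝ) / 2) = x * √x := by
  rw [show (3 : ℝ) / 2 = 1 + 1 / 2 by norm_num, rpow_add' hx (by norm_num), rpow_one,
    ← sqrt_eq_rpow]

lemma one_add_mul_sin_sq_pos {a : ℝ} (ha : -1 < a) (t : ℝ) : 0 < 1 + a * sin t ^ 2 := by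
  rcases le_or_gt 0 a with h | h
  · positivity
  · nlinarith [sin_sq_le_one t]

lemma hasDerivAt_cos_div_sqrt_one_add_mul_sin_sq {a t : ℝ} (ht : 0 < 1 + a * sin t ^ 2) :
    HasDerivAt (fun t => cos t / √(1 + a * sin t ^ 2))
      (-((1 + a) * sin t / (1 + a * sin t ^ 2) ^ ((3 : ℝ) / 2))) t := by
  have hu : HasDerivAt (fun t => 1 + a * sin t ^ 2) (a * (2 * sin t * cos t)) t := by
    simpa [mul_comm, mul_assoc, mul_left_comm] using
      (((hasDerivAt_sin t).pow 2).const_mul a).const_add 1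
  refine ((hasDerivAt_cos t).div (hu.sqrt ht.ne') (sqrt_pos.mpr ht).ne').congr_deriv ?_
  rw [rpow_three_halves_eq_mul_sqrt ht.le]
  have hS := sqrt_pos.mpr ht
  have hsq : √(1 + a * sin t ^ 2) ^ 2 = 1 + a * sin t ^ 2 := sq_sqrt ht.le
  generalize √(1 + a * sin t ^ 2) = S at hS hsq
  rw [← hsq]
  field_simp
  linear_combination (-(a * sin t)) * sin_sq_add_cos_sq t - sin t * hsq

lemma integral_sqrt_mul_sin_div_one_add_mul_sin_sq_rpow {a : ℝ} (ha : -1 < a) (w : ℝ) :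
    ∫ τ in (0 : ℝ)..w, √(1 + a) * sin τ / (1 + a * sin τ ^ 2) ^ ((3 : ℝ) / 2)
      = (1 - cos w / √(1 + a * sin w ^ 2)) / √(1 + a) := by
  have hA : 0 < √(1 + a) := sqrt_pos.mpr (by linarith)
  have hderiv (t : ℝ) : HasDerivAt (fun t => (1 - cos t / √(1 + a * sin t ^ 2)) / √(1 + a))
      (√(1 + a) * sin t / (1 + a * sin t ^ 2) ^ ((3 : ℝ) / 2)) t := by
    refine (((hasDerivAt_cos_div_sqrt_one_add_mul_sin_sq (one_add_mul_sin_sq_pos ha t)).const_sub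
      1).div_const _).congr_deriv ?_
    field_simp
    rw [sq_sqrt (by linarith)]
    ring
  have hcont : Continuous fun τ => √(1 + a) * sin τ / (1 + a * sin τ ^ 2) ^ ((3 : ℝ) / 2) :=
    Continuous.div (by fun_prop) (by fun_prop (disch := norm_num))
      fun τ => (rpow_pos_of_pos (one_add_mul_sin_sq_pos ha τ) _).ne'
  rw [intervalIntegral.integral_eq_sub_of_hasDerivAt (fun t _ => hderiv t)
    (hcont.intervalIntegrable 0 w)]
  simp

/-- The geodesic deformation of the unit sphere is again a sphere, of radius
`1/√(1 + a)`: the deformed meridian `(r̄, z̄)` lies on the circle of radius `1/√(1 + a)`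
centered at height `1/√(1 + a)`. -/
theorem deformed_sphere_is_sphere
    (a : ℝ) (ha : a > -1)
    (rbar zbar : ℝ → ℝ)
    (hrbar : rbar = fun w => Real.sin w / Real.sqrt (1 + a * Real.sin w ^ 2))
    (hzbar : zbar = fun w => ∫ τ in (0:ℝ)..w,
      Real.sqrt (1 + a) * Real.sin τ / (1 + a * Real.sin τ ^ 2) ^ ((3 : ℝ) / 2)) :
    ∀ w ∈ Set.Icc 0 Real.pi,
      rbar w ^ 2 + (1 / Real.sqrt (1 + a) - zbar w) ^ 2 = 1 / (1 + a) := by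
  intro w _
  have hu := one_add_mul_sin_sq_pos ha w
  have hA : 0 < 1 + a := by linarith
  subst hrbar hzbar
  dsimp only
  rw [integral_sqrt_mul_sin_div_one_add_mul_sin_sq_rpow ha w,
    show ∀ c S T : ℝ, 1 / T - (1 - c / S) / T = c / (T * S) by intros; ring,
    div_pow, div_pow, mul_pow, sq_sqrt hu.le, sq_sqrt hA.le,
    div_add_div _ _ hu.ne' (by positivity), div_eq_div_iff (by positivity) hA.ne']
  linear_combination (1 + a) * (1 + a * sin w ^ 2) * sin_sq_add_cos_sq w
end

section
/- Let k > 0 and 0 < r₀ < k, and for a in a neighbourhood of 0 define Z(a) = ∫₀^{r₀} (t/(k·√(k² − t²)))·√((1 + a·k²·(k² − t²))/(1 + a·(k² − t²))) dt. Then Z(0) = 1 − √(k² − r₀²)/k and Z has derivative at a = 0 equal to −k²·(1 − k²)/6 + ((1 − k²)/(6·k))·(k² − r₀²)^{3/2}. -/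
/-!
With `u = k² − t²` the integrand is the weight `t / (k √u)` times `√((1 + a k² u) / (1 + a u))`.
The `a`-derivative of the second factor is `(k² − 1) u / (1 + a u)² / (2 √(…))`, which is
`(k² − 1) u / 2` at `a = 0` and stays bounded for small `|a|`, so one may differentiate under the
integral sign. What remains are two elementary integrals: `t / √(k² − t²)` and `t √(k² − t²)`
have antiderivatives `−√(k² − t²)` and `−(k² − t²)^{3/2} / 3`.
-/

open Real MeasureTheory intervalIntegral Set Filter Topology
open scoped Interval

theorem hasDerivAt_integral_mul_of_deriv_le {w B : ℝ → ℝ} {φ φ' : ℝ → ℝ → ℝ} {a b x₀ : ℝ}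
    {s : Set ℝ} (hs : s ∈ 𝓝 x₀) (hw : IntervalIntegrable w volume a b)
    (hφ : ∀ x ∈ s, ContinuousOn (φ x) [[a, b]]) (hφ' : ContinuousOn (φ' x₀) [[a, b]])
    (hB : ContinuousOn B [[a, b]])
    (hderiv : ∀ t ∈ Ι a b, ∀ x ∈ s, HasDerivAt (fun x => φ x t) (φ' x t) x)
    (hbound : ∀ t ∈ Ι a b, ∀ x ∈ s, |φ' x t| ≤ B t) :
    HasDerivAt (fun x => ∫ t in a..b, w t * φ x t) (∫ t in a..b, w t * φ' x₀ t) x₀ :=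
  (hasDerivAt_integral_of_dominated_loc_of_deriv_le (bound := fun t => |w t| * B t) hs
    (eventually_of_mem hs fun x hx =>
      (hw.mul_continuousOn (hφ x hx)).aestronglyMeasurable_restrict_uIoc)
    (hw.mul_continuousOn (hφ x₀ (mem_of_mem_nhds hs)))
    (hw.mul_continuousOn hφ').aestronglyMeasurable_restrict_uIoc
    (ae_of_all _ fun t ht x hx => by
      rw [norm_mul, Real.norm_eq_abs, Real.norm_eq_abs]
      exact mul_le_mul_of_nonneg_left (hbound t ht x hx) (abs_nonneg _))
    (hw.abs.mul_continuousOn hB)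
    (ae_of_all _ fun t ht x hx => (hderiv t ht x hx).const_mul (w t))).2

section DeformationFactor

variable {a c u : ℝ}

theorem hasDerivAt_sqrt_div_one_add_mul (hu : 1 + a * u ≠ 0) (hcu : 1 + a * c * u ≠ 0) :
    HasDerivAt (fun a => √((1 + a * c * u) / (1 + a * u)))
      ((c - 1) * u / (1 + a * u) ^ 2 / (2 * √((1 + a * c * u) / (1 + a * u)))) a := by
  have hnum : HasDerivAt (fun a => 1 + a * c * u) (c * u) a := by
    simpa [mul_assoc] using ((hasDerivAt_id a).mul_const (c * u)).const_add 1
  have hden : HasDerivAt (fun a => 1 + a * u) u a := by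
    simpa using ((hasDerivAt_id a).mul_const u).const_add 1
  rw [show (c - 1) * u = c * u * (1 + a * u) - (1 + a * c * u) * u by ring]
  exact (hnum.div hden hu).sqrt (div_ne_zero hcu hu)

theorem abs_deriv_sqrt_div_one_add_mul_le (hu : |a * u| ≤ 1 / 2) (hcu : |a * c * u| ≤ 1 / 2) :
    |(c - 1) * u / (1 + a * u) ^ 2 / (2 * √((1 + a * c * u) / (1 + a * u)))| ≤
      4 * |(c - 1) * u| := by
  obtain ⟨hu₁, hu₂⟩ := abs_le.mp hu
  obtain ⟨hcu₁, hcu₂⟩ := abs_le.mp hcu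
  have hratio : 1 / 4 ≤ (1 + a * c * u) / (1 + a * u) := by
    rw [le_div_iff₀ (by linarith)]; linarith
  have hsqrt : 1 / 2 ≤ √((1 + a * c * u) / (1 + a * u)) :=
    le_sqrt_of_sq_le (by linarith)
  have hden : 1 / 4 ≤ (1 + a * u) ^ 2 * (2 * √((1 + a * c * u) / (1 + a * u))) := by
    nlinarith
  have hDpos : 0 < (1 + a * u) ^ 2 * (2 * √((1 + a * c * u) / (1 + a * u))) := by linarith
  rw [div_div, abs_div, abs_of_pos hDpos, div_le_iff₀ hDpos]
  nlinarith [abs_nonneg ((c - 1) * u)]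

end DeformationFactor

theorem hasDerivAt_neg_sqrt_sub_sq {c t : ℝ} (ht : 0 < c - t ^ 2) :
    HasDerivAt (fun t => -√(c - t ^ 2)) (t / √(c - t ^ 2)) t := by
  refine (((hasDerivAt_pow 2 t).const_sub c).sqrt ht.ne').neg.congr_deriv ?_
  field_simp
  ring

theorem hasDerivAt_sub_sq_rpow_three_halves (c t : ℝ) :
    HasDerivAt (fun t => -(c - t ^ 2) ^ ((3 : ℝ) / 2) / 3) (t * √(c - t ^ 2)) t := by
  refine (((hasDerivAt_pow 2 t).const_sub c).rpow_const (p := 3 / 2)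
    (by norm_num)).neg.div_const 3 |>.congr_deriv ?_
  rw [sqrt_eq_rpow]
  norm_num
  ring

theorem integral_div_sqrt_sub_sq {a b c : ℝ} (h : ∀ t ∈ [[a, b]], 0 < c - t ^ 2) :
    ∫ t in a..b, t / √(c - t ^ 2) = √(c - a ^ 2) - √(c - b ^ 2) := by
  rw [integral_eq_sub_of_hasDerivAt (fun t ht => hasDerivAt_neg_sqrt_sub_sq (h t ht))]
  · ring
  · exact (continuousOn_id.div (by fun_prop) fun t ht =>
      (sqrt_pos.2 (h t ht)).ne').intervalIntegrable

theorem integral_mul_sqrt_sub_sq (a b c : ℝ) :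
    ∫ t in a..b, t * √(c - t ^ 2) =
      ((c - a ^ 2) ^ ((3 : ℝ) / 2) - (c - b ^ 2) ^ ((3 : ℝ) / 2)) / 3 := by
  rw [integral_eq_sub_of_hasDerivAt (fun t _ => hasDerivAt_sub_sq_rpow_three_halves c t)
    ((by fun_prop : Continuous fun t => t * √(c - t ^ 2)).intervalIntegrable _ _)]
  ring

noncomputable def meridianHeight (k r₀ a : ℝ) : ℝ :=
  ∫ t in (0 : ℝ)..r₀, t / (k * √(k ^ 2 - t ^ 2)) *
    √((1 + a * k ^ 2 * (k ^ 2 - t ^ 2)) / (1 + a * (k ^ 2 - t ^ 2)))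

section Meridian

variable {k r₀ : ℝ}

theorem sub_sq_pos_of_mem_uIcc (h : |r₀| < k) {t : ℝ} (ht : t ∈ [[0, r₀]]) :
    0 < k ^ 2 - t ^ 2 := by
  have ht' : |t| < k := by simpa using (abs_sub_left_of_mem_uIcc ht).trans_lt (by simpa using h)
  nlinarith [sq_lt_sq' (abs_lt.mp ht').1 (abs_lt.mp ht').2]

theorem continuousOn_meridian_weight (h : |r₀| < k) :
    ContinuousOn (fun t => t / (k * √(k ^ 2 - t ^ 2))) [[0, r₀]] := by
  have hk : 0 < k := (abs_nonneg r₀).trans_lt h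
  exact continuousOn_id.div (by fun_prop) fun t ht =>
    (mul_pos hk (sqrt_pos.2 (sub_sq_pos_of_mem_uIcc h ht))).ne'

theorem meridianHeight_zero (h : |r₀| < k) :
    meridianHeight k r₀ 0 = 1 - √(k ^ 2 - r₀ ^ 2) / k := by
  have hk : 0 < k := (abs_nonneg r₀).trans_lt h
  simp only [meridianHeight, zero_mul, add_zero, div_one, sqrt_one, mul_one,
    div_mul_eq_div_div_swap]
  rw [intervalIntegral.integral_div,
    integral_div_sqrt_sub_sq fun t ht => sub_sq_pos_of_mem_uIcc h ht]
  field_simp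
  simp [sqrt_sq hk.le]

theorem integral_meridian_weight_mul_sub_sq (h : |r₀| < k) :
    ∫ t in (0 : ℝ)..r₀, t / (k * √(k ^ 2 - t ^ 2)) * ((k ^ 2 - 1) * (k ^ 2 - t ^ 2) / 2) =
      -(k ^ 2 * (1 - k ^ 2)) / 6 + (1 - k ^ 2) / (6 * k) * (k ^ 2 - r₀ ^ 2) ^ ((3 : ℝ) / 2) := by
  have hk : 0 < k := (abs_nonneg r₀).trans_lt h
  have hweight : ∀ t ∈ [[0, r₀]],
      t / (k * √(k ^ 2 - t ^ 2)) * ((k ^ 2 - 1) * (k ^ 2 - t ^ 2) / 2) =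
        (k ^ 2 - 1) / (2 * k) * (t * √(k ^ 2 - t ^ 2)) := by
    intro t ht
    have hs := sqrt_pos.2 (sub_sq_pos_of_mem_uIcc h ht)
    have hsq := sq_sqrt (sub_sq_pos_of_mem_uIcc h ht).le
    field_simp
    rw [hsq]
  have hk3 : (k ^ 2 - 0 ^ 2) ^ ((3 : ℝ) / 2) = k ^ 3 := by
    rw [zero_pow two_ne_zero, sub_zero, ← rpow_natCast, ← rpow_mul hk.le]
    norm_num
  rw [integral_congr hweight, intervalIntegral.integral_const_mul, integral_mul_sqrt_sub_sq, hk3]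
  field_simp
  ring

theorem hasDerivAt_meridianHeight (h : |r₀| < k) :
    HasDerivAt (meridianHeight k r₀)
      (-(k ^ 2 * (1 - k ^ 2)) / 6 + (1 - k ^ 2) / (6 * k) * (k ^ 2 - r₀ ^ 2) ^ ((3 : ℝ) / 2)) 0 := by
  set ε : ℝ := 1 / (2 * (1 + k ^ 2) ^ 2)
  have hsmall : ∀ x ∈ Metric.ball (0 : ℝ) ε, ∀ t ∈ [[0, r₀]],
      |x * (k ^ 2 - t ^ 2)| ≤ 1 / 2 ∧ |x * k ^ 2 * (k ^ 2 - t ^ 2)| ≤ 1 / 2 := by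
    intro x hx t ht
    have hu := sub_sq_pos_of_mem_uIcc h ht
    have hx' : |x| * (1 + k ^ 2) ^ 2 < 1 / 2 := by
      rw [Metric.mem_ball, dist_zero_right, Real.norm_eq_abs, lt_div_iff₀ (by positivity)] at hx
      linarith
    rw [abs_mul, abs_mul, abs_mul, abs_of_pos hu, abs_of_nonneg (sq_nonneg k)]
    constructor <;> nlinarith [abs_nonneg x, sq_nonneg t, sq_nonneg k]
  have key := hasDerivAt_integral_mul_of_deriv_le
    (φ := fun a t => √((1 + a * k ^ 2 * (k ^ 2 - t ^ 2)) / (1 + a * (k ^ 2 - t ^ 2))))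
    (φ' := fun a t => (k ^ 2 - 1) * (k ^ 2 - t ^ 2) / (1 + a * (k ^ 2 - t ^ 2)) ^ 2 /
      (2 * √((1 + a * k ^ 2 * (k ^ 2 - t ^ 2)) / (1 + a * (k ^ 2 - t ^ 2)))))
    (B := fun t => 4 * |(k ^ 2 - 1) * (k ^ 2 - t ^ 2)|)
    (Metric.ball_mem_nhds 0 (by positivity : 0 < ε))
    (continuousOn_meridian_weight h).intervalIntegrable
    ?_ (by simp only [zero_mul, add_zero, div_one, one_pow, sqrt_one, mul_one]; fun_prop)
    (by fun_prop) ?_ ?_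
  · simp only [zero_mul, add_zero, one_pow, div_one, sqrt_one, mul_one] at key
    rw [integral_meridian_weight_mul_sub_sq h] at key
    exact key
  · intro x hx
    refine (continuousOn_const.add (by fun_prop)).div (by fun_prop) (fun t ht => ?_) |>.sqrt
    linarith [(abs_le.mp (hsmall x hx t ht).1).1]
  · intro t ht x hx
    obtain ⟨hu, hcu⟩ := hsmall x hx t (uIoc_subset_uIcc ht)
    exact hasDerivAt_sqrt_div_one_add_mul (by linarith [(abs_le.mp hu).1])
      (by linarith [(abs_le.mp hcu).1])
  · intro t ht x hx
    obtain ⟨hu, hcu⟩ := hsmall x hx t (uIoc_subset_uIcc ht)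
    exact abs_deriv_sqrt_div_one_add_mul_le hu hcu

end Meridian

theorem deformed_meridian_linear_approximation_general
    (k r₀ : ℝ) (hr₀ : 0 < r₀) (hr₀k : r₀ < k)
    (Z : ℝ → ℝ)
    (hZ : Z = fun a => ∫ t in (0:ℝ)..r₀,
      t / (k * Real.sqrt (k ^ 2 - t ^ 2)) *
        Real.sqrt ((1 + a * k ^ 2 * (k ^ 2 - t ^ 2)) / (1 + a * (k ^ 2 - t ^ 2)))) :
    Z 0 = 1 - Real.sqrt (k ^ 2 - r₀ ^ 2) / k ∧
    HasDerivAt Z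
      (-(k ^ 2 * (1 - k ^ 2)) / 6 +
        (1 - k ^ 2) / (6 * k) * (k ^ 2 - r₀ ^ 2) ^ ((3 : ℝ) / 2)) 0 := by
  have h : |r₀| < k := by rwa [abs_of_pos hr₀]
  subst hZ
  exact ⟨meridianHeight_zero h, hasDerivAt_meridianHeight h⟩

/-- Linear approximation in the deformation parameter `a` of the meridian height
`Z(a) = ∫₀^{r₀} (t/(k√(k² − t²)))·√((1 + ak²(k² − t²))/(1 + a(k² − t²))) dt` of the
deformed ellipsoid: `Z(0) = 1 − √(k² − r₀²)/k` and
`Z'(0) = −k²(1 − k²)/6 + ((1 − k²)/(6k))(k² − r₀²)^{3/2}`. -/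
theorem deformed_meridian_linear_approximation
    (k r₀ : ℝ) (hk : 0 < k) (hr₀ : 0 < r₀) (hr₀k : r₀ < k)
    (Z : ℝ → ℝ)
    (hZ : Z = fun a => ∫ t in (0:ℝ)..r₀,
      t / (k * Real.sqrt (k ^ 2 - t ^ 2)) *
        Real.sqrt ((1 + a * k ^ 2 * (k ^ 2 - t ^ 2)) / (1 + a * (k ^ 2 - t ^ 2)))) :
    Z 0 = 1 - Real.sqrt (k ^ 2 - r₀ ^ 2) / k ∧
    HasDerivAt Z
      (-(k ^ 2 * (1 - k ^ 2)) / 6 +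
        (1 - k ^ 2) / (6 * k) * (k ^ 2 - r₀ ^ 2) ^ ((3 : ℝ) / 2)) 0 :=
  deformed_meridian_linear_approximation_general k r₀ hr₀ hr₀k Z hZ
end
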